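/- (Generalized Picone inequality) Let H be a C¹ norm on ℝⁿ\{0}, 1 < q ≤ p, and u, v ∈ C¹ with u ≥ 0, v > 0. Then pointwise, H(∇v)^{p-1} H_ξ(∇v) · ∇(u^q / v^{q-1}) ≤ H(∇u)^q H(∇v)^{p-q}. -/

import Mathlib

open Set

private lemma young_aux {A s q : ℝ} (hA : 0 ≤ A) (hs : 0 ≤ s) (hq : 1 < q) :
    q * (s ^ (q - 1) * A) ≤ A ^ q + (q - 1) * s ^ q := by
  have hq0 : (0:ℝ) < q := by linarith
  have h := Real.geom_mean_le_arith_mean2_weighted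
    (w₁ := 1/q) (w₂ := (q-1)/q) (p₁ := A ^ q) (p₂ := s ^ q)
    (by positivity) (div_nonneg (by linarith) (by linarith)) (Real.rpow_nonneg hA q)
    (Real.rpow_nonneg hs q)
    (by field_simp; ring)
  have e1 : (A ^ q) ^ (1/q : ℝ) = A := by
    rw [← Real.rpow_mul hA, mul_one_div, div_self hq0.ne', Real.rpow_one]
  have e2 : (s ^ q) ^ ((q-1)/q : ℝ) = s ^ (q - 1) := by
    rw [← Real.rpow_mul hs]
    congr 1
    field_simp
  rw [e1, e2] at h
  have h2 := mul_le_mul_of_nonneg_left h hq0.le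
  calc q * (s ^ (q - 1) * A) = q * (A * s ^ (q - 1)) := by ring
    _ ≤ q * (1/q * A ^ q + (q-1)/q * s ^ q) := h2
    _ = A ^ q + (q - 1) * s ^ q := by field_simp

private lemma picone_scalar {q p A B U V : ℝ} (hq : 1 < q) (hqp : q ≤ p)
    (hA : 0 ≤ A) (hB : 0 < B) (hU : 0 ≤ U) (hV : 0 < V) :
    B ^ (p-1) * (q * U^(q-1) / V^(q-1) * A - (q-1) * U^q / V^q * B) ≤ A^q * B^(p-q) := by
  set t : ℝ := U / V with ht
  have ht0 : 0 ≤ t := div_nonneg hU hV.le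
  set s : ℝ := t * B with hsdef
  have hs0 : 0 ≤ s := mul_nonneg ht0 hB.le
  have key := young_aux hA hs0 hq
  have hB1 : B ^ (p-1) = B ^ (p-q) * B ^ (q-1) := by
    rw [← Real.rpow_add hB]; ring_nf
  have hB2 : B ^ (p-1) * B = B ^ (p-q) * B ^ q := by
    have h7 : B ^ (p-1) * B ^ (1:ℝ) = B ^ (p-q) * B ^ q := by
      rw [← Real.rpow_add hB (p-1) 1, ← Real.rpow_add hB (p-q) q]
      congr 1; ring
    simpa [Real.rpow_one] using h7
  have e3' : s ^ (q-1) = U ^ (q-1) / V ^ (q-1) * B ^ (q-1) := by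
    rw [hsdef, Real.mul_rpow ht0 hB.le, ht, Real.div_rpow hU hV.le]
  have e4' : s ^ q = U ^ q / V ^ q * B ^ q := by
    rw [hsdef, Real.mul_rpow ht0 hB.le, ht, Real.div_rpow hU hV.le]
  have main : B ^ (p-1) * (q * U^(q-1) / V^(q-1) * A - (q-1) * U^q / V^q * B)
      = B ^ (p-q) * (q * (s ^ (q-1) * A) - (q-1) * s ^ q) := by
    linear_combination (q * U^(q-1) / V^(q-1) * A) * hB1 - ((q-1) * U^q / V^q) * hB2
      - (B^(p-q) * q * A) * e3' + (B^(p-q) * (q-1)) * e4'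
  rw [main]
  have h5 : q * (s ^ (q-1) * A) - (q-1) * s ^ q ≤ A ^ q := by linarith
  calc B ^ (p-q) * (q * (s ^ (q-1) * A) - (q-1) * s ^ q)
      ≤ B ^ (p-q) * A ^ q := mul_le_mul_of_nonneg_left h5 (Real.rpow_nonneg hB.le _)
    _ = A ^ q * B ^ (p-q) := mul_comm _ _

/-- generalized Picone inequality: for a `C¹` norm `H` on `ℝⁿ\{0}`
(satisfying the Euler identity `H_ξ(ξ)·ξ = H(ξ)` and the dual bound `H_ξ(ξ)·η ≤ H(η)`),
`1 < q ≤ p`, and differentiable `u ≥ 0`, `v > 0`, one has pointwise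
`H(∇v)^{p-1} H_ξ(∇v) · ∇(u^q / v^{q-1}) ≤ H(∇u)^q H(∇v)^{p-q}`. -/
theorem generalized_picone_inequality {n : ℕ}
    (H : EuclideanSpace ℝ (Fin n) → ℝ)
    (hconv : ConvexOn ℝ Set.univ H)
    (hhom : ∀ (t : ℝ) (ξ : EuclideanSpace ℝ (Fin n)), H (t • ξ) = |t| * H ξ)
    (hnonneg : ∀ ξ, 0 ≤ H ξ)
    (hdiff : ∀ ξ : EuclideanSpace ℝ (Fin n), ξ ≠ 0 → DifferentiableAt ℝ H ξ)
    (hEuler : ∀ ξ : EuclideanSpace ℝ (Fin n), ξ ≠ 0 →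
      (inner ℝ (gradient H ξ) ξ : ℝ) = H ξ)
    (hdual : ∀ ξ : EuclideanSpace ℝ (Fin n), ξ ≠ 0 →
      ∀ η : EuclideanSpace ℝ (Fin n), (inner ℝ (gradient H ξ) η : ℝ) ≤ H η)
    (p q : ℝ) (hq : 1 < q) (hqp : q ≤ p)
    (u v : EuclideanSpace ℝ (Fin n) → ℝ)
    (hu : Differentiable ℝ u) (hv : Differentiable ℝ v)
    (hu0 : ∀ x, 0 ≤ u x) (hv0 : ∀ x, 0 < v x) :
    ∀ x : EuclideanSpace ℝ (Fin n),
      H (gradient v x) ^ (p - 1) *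
          (inner ℝ (gradient H (gradient v x))
            (gradient (fun y => u y ^ q / v y ^ (q - 1)) x) : ℝ) ≤
        H (gradient u x) ^ q * H (gradient v x) ^ (p - q) := by
  intro x
  have hRHS : (0:ℝ) ≤ H (gradient u x) ^ q * H (gradient v x) ^ (p - q) :=
    mul_nonneg (Real.rpow_nonneg (hnonneg _) _) (Real.rpow_nonneg (hnonneg _) _)
  by_cases hB : H (gradient v x) = 0
  · rw [hB, Real.zero_rpow (by linarith : p - 1 ≠ 0), zero_mul]
    exact mul_nonneg (Real.rpow_nonneg (hnonneg _) _) (Real.rpow_nonneg le_rfl _)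
  · set a := gradient u x with ha
    set b := gradient v x with hb
    have hbne : b ≠ 0 := by
      intro h
      have h0 : H (0 : EuclideanSpace ℝ (Fin n)) = 0 := by
        have := hhom 0 (0 : EuclideanSpace ℝ (Fin n)); simpa using this
      exact hB (h ▸ h0)
    have hBpos : 0 < H b := lt_of_le_of_ne (hnonneg b) (Ne.symm hB)
    have hVpos : 0 < v x := hv0 x
    have hUnn : 0 ≤ u x := hu0 x
    have hV1 : 0 < v x ^ (q-1) := Real.rpow_pos_of_pos hVpos _
    -- derivatives
    have hDu : HasFDerivAt u (InnerProductSpace.toDual ℝ _ a) x :=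
      (hu x).hasGradientAt.hasFDerivAt
    have hDv : HasFDerivAt v (InnerProductSpace.toDual ℝ _ b) x :=
      (hv x).hasGradientAt.hasFDerivAt
    have h1 : HasFDerivAt (fun y => u y ^ q)
        ((q * u x ^ (q - 1)) • (InnerProductSpace.toDual ℝ _ a)) x :=
      hDu.rpow_const (Or.inr hq.le)
    have h2' : HasFDerivAt (fun y => v y ^ (q-1))
        (((q-1) * v x ^ (q - 1 - 1)) • (InnerProductSpace.toDual ℝ _ b)) x :=
      hDv.rpow_const (Or.inl hVpos.ne')
    have h2 : HasFDerivAt (fun y => (v y ^ (q-1))⁻¹)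
        ((-((v x ^ (q-1)) ^ 2)⁻¹) • (((q-1) * v x ^ (q - 1 - 1)) •
          (InnerProductSpace.toDual ℝ _ b))) x :=
      (hasDerivAt_inv hV1.ne').comp_hasFDerivAt x h2'
    have h3 := h1.mul h2
    set c₁ : ℝ := (v x ^ (q-1))⁻¹ * (q * u x ^ (q - 1)) with hc₁def
    set c₂ : ℝ := u x ^ q * (-((v x ^ (q-1)) ^ 2)⁻¹ * ((q-1) * v x ^ (q - 1 - 1))) with hc₂def
    have hw : HasGradientAt (fun y => u y ^ q / v y ^ (q - 1)) (c₁ • a + c₂ • b) x := by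
      rw [hasGradientAt_iff_hasFDerivAt]
      simp only [div_eq_mul_inv]
      convert h3 using 1
      · rfl
      · rfl
      simp only [map_add, map_smul, smul_smul, hc₁def, hc₂def]
      module
    rw [hw.gradient, inner_add_right, real_inner_smul_right, real_inner_smul_right,
      hEuler b hbne]
    have hIA : (inner ℝ (gradient H b) a : ℝ) ≤ H a := hdual b hbne a
    have hc₁nn : 0 ≤ c₁ :=
      mul_nonneg (inv_nonneg.2 hV1.le)
        (mul_nonneg (by linarith) (Real.rpow_nonneg hUnn _))
    have hVq : (0:ℝ) < v x ^ q := Real.rpow_pos_of_pos hVpos q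
    have hc₂ : c₂ = -((q-1) * u x ^ q / v x ^ q) := by
      have h5 : v x ^ (q-1-1) * v x ^ q = v x ^ (q-1) * v x ^ (q-1) := by
        rw [← Real.rpow_add hVpos, ← Real.rpow_add hVpos]
        congr 1; ring
      have h6 : ((v x ^ (q-1):ℝ)) ^ 2 = v x ^ (q-1) * v x ^ (q-1) := sq (v x ^ (q-1))
      have hV1ne : (v x ^ (q-1):ℝ) ≠ 0 := hV1.ne'
      have hVqne : (v x ^ q:ℝ) ≠ 0 := hVq.ne'
      have hred : v x ^ (q-1-1) * (((v x ^ (q-1):ℝ)) ^ 2)⁻¹ = (v x ^ q)⁻¹ := by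
        rw [h6]
        field_simp
        linear_combination h5
      rw [hc₂def, div_eq_mul_inv]
      linear_combination (-(q-1) * u x ^ q) * hred
    have step1 : c₁ * (inner ℝ (gradient H b) a : ℝ) + c₂ * H b
        ≤ q * u x ^ (q-1) / v x ^ (q-1) * H a - (q-1) * u x ^ q / v x ^ q * H b := by
      have : c₁ * (inner ℝ (gradient H b) a : ℝ) ≤ c₁ * H a :=
        mul_le_mul_of_nonneg_left hIA hc₁nn
      have hc₁eq : c₁ = q * u x ^ (q-1) / v x ^ (q-1) := by
        rw [hc₁def, div_eq_mul_inv]; ring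
      rw [hc₁eq] at this
      rw [hc₂, hc₁eq]
      linarith
    calc H b ^ (p-1) * (c₁ * (inner ℝ (gradient H b) a : ℝ) + c₂ * H b)
        ≤ H b ^ (p-1) * (q * u x ^ (q-1) / v x ^ (q-1) * H a - (q-1) * u x ^ q / v x ^ q * H b) :=
          mul_le_mul_of_nonneg_left step1 (Real.rpow_nonneg (hnonneg _) _)
      _ ≤ H a ^ q * H b ^ (p-q) :=
          picone_scalar hq hqp (hnonneg a) hBpos hUnn hVpos
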